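/- For every transition system T, the refinement relation ⇝ is directed on the class F_T of finite abstractions of T: for any two finite abstractions S₁ and S₂ of T there exists a finite abstraction S of T such that S₁ ⇝ S and S₂ ⇝ S. -/

import Mathlib

namespace MLAR

/-- Modal formulas over a countably infinite set of propositional variables (indexed by ℕ). -/
inductive MF : Type where
  | top : MF
  | var : ℕ → MF
  | and : MF → MF → MF
  | neg : MF → MF
  | dia : MF → MF

namespace MF

/-- □φ := ¬◇¬φ -/
def box (φ : MF) : MF := neg (dia (neg φ))

/-- Material implication, definable classically from ∧ and ¬. -/
def imp (φ ψ : MF) : MF := neg (and φ (neg ψ))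

/-- Uniform substitution. -/
def subst (σ : ℕ → MF) : MF → MF
  | top => top
  | var p => σ p
  | and φ ψ => and (subst σ φ) (subst σ ψ)
  | neg φ => neg (subst σ φ)
  | dia φ => dia (subst σ φ)

/-- Satisfaction of a modal formula at a world of a Kripke model. -/
def Sat {W : Type*} (R : W → W → Prop) (V : ℕ → Set W) : MF → W → Prop
  | top, _ => True
  | var p, w => w ∈ V p
  | and φ ψ, w => Sat R V φ w ∧ Sat R V ψ w
  | neg φ, w => ¬ Sat R V φ w
  | dia φ, w => ∃ v, R w v ∧ Sat R V φ v

end MF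

/-- A boolean evaluation: respects ⊤, ∧, ¬, treating variables and ◇-formulas as atoms. -/
def IsPropEval (v : MF → Prop) : Prop :=
  v MF.top ∧ (∀ φ ψ, v (MF.and φ ψ) ↔ (v φ ∧ v ψ)) ∧ (∀ φ, v (MF.neg φ) ↔ ¬ v φ)

/-- Propositional tautologies. -/
def IsTautology (φ : MF) : Prop := ∀ v, IsPropEval v → v φ

/-- The K-axiom □(p→q)→(□p→□q). -/
def axK : MF := (((MF.var 0).imp (MF.var 1)).box).imp (((MF.var 0).box).imp ((MF.var 1).box))

/-- Normal modal logics. -/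
def IsNormal (L : Set MF) : Prop :=
  (∀ φ, IsTautology φ → φ ∈ L) ∧
  axK ∈ L ∧
  (∀ φ ψ, φ ∈ L → φ.imp ψ ∈ L → ψ ∈ L) ∧
  (∀ φ σ, φ ∈ L → φ.subst σ ∈ L) ∧
  (∀ φ, φ ∈ L → φ.box ∈ L)

/-- The smallest normal modal logic containing Γ. -/
def KPlus (Γ : Set MF) : Set MF := ⋂₀ {L | IsNormal L ∧ Γ ⊆ L}

/-- (T) = p → ◇p -/
def axT : MF := (MF.var 0).imp ((MF.var 0).dia)
/-- (4) = ◇◇p → ◇p -/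
def ax4 : MF := ((MF.var 0).dia.dia).imp ((MF.var 0).dia)
/-- (.2) = ◇□p → □◇p -/
def axDot2 : MF := ((MF.var 0).box.dia).imp ((MF.var 0).dia.box)
/-- (.1) = □◇p → ◇□p -/
def axDot1 : MF := ((MF.var 0).dia.box).imp ((MF.var 0).box.dia)
/-- Grzegorczyk axiom □(□(p→□p)→p)→p -/
def axGrz : MF := ((((MF.var 0).imp ((MF.var 0).box)).box.imp (MF.var 0)).box).imp (MF.var 0)

def S4 : Set MF := KPlus {axT, ax4}
def S4Dot2 : Set MF := KPlus {axT, ax4, axDot2}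
def S4Dot1 : Set MF := KPlus {axT, ax4, axDot1}
def S4Dot2Dot1 : Set MF := KPlus {axT, ax4, axDot2, axDot1}
def Grz : Set MF := KPlus {axGrz}

/-- Transition systems over a set AP of atomic propositions. -/
structure TS (AP : Type) : Type 1 where
  State : Type
  rel : State → State → Prop
  init : Set State
  label : State → Set AP
  nonempty : Nonempty State
  serial : ∀ s, ∃ t, rel s t

/-- `f` witnesses that T₁ is an abstraction of T₂. -/
def IsAbstractionMap {AP : Type} (T₁ T₂ : TS AP) (f : T₂.State → T₁.State) : Prop :=
  Function.Surjective f ∧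
  (∀ s, T₁.label (f s) = T₂.label s) ∧
  (∀ a b, T₁.rel a b ↔ ∃ s t, T₂.rel s t ∧ f s = a ∧ f t = b) ∧
  T₁.init = f '' T₂.init

/-- `Abs T₁ T₂` : T₁ is an abstraction of T₂ (written T₁ ⇝ T₂; T₂ is a refinement of T₁). -/
def Abs {AP : Type} (T₁ T₂ : TS AP) : Prop := ∃ f, IsAbstractionMap T₁ T₂ f

mutual
/-- CTL state formulas. -/
inductive CTLs (AP : Type) : Type where
  | top : CTLs AP
  | atom : AP → CTLs AP
  | and : CTLs AP → CTLs AP → CTLs AP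
  | neg : CTLs AP → CTLs AP
  | ex : CTLp AP → CTLs AP
  | al : CTLp AP → CTLs AP
/-- CTL path formulas. -/
inductive CTLp (AP : Type) : Type where
  | next : CTLs AP → CTLp AP
  | untl : CTLs AP → CTLs AP → CTLp AP
end

/-- Infinite paths of a transition system. -/
def TS.IsPath {AP : Type} (T : TS AP) (π : ℕ → T.State) : Prop := ∀ i, T.rel (π i) (π (i + 1))

mutual
/-- Satisfaction of CTL state formulas at states. -/
def CTLs.Sat {AP : Type} (T : TS AP) : CTLs AP → T.State → Prop
  | .top, _ => True
  | .atom a, s => a ∈ T.label s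
  | .and φ ψ, s => CTLs.Sat T φ s ∧ CTLs.Sat T ψ s
  | .neg φ, s => ¬ CTLs.Sat T φ s
  | .ex φ, s => ∃ π, T.IsPath π ∧ π 0 = s ∧ CTLp.Sat T φ π
  | .al φ, s => ∀ π, T.IsPath π → π 0 = s → CTLp.Sat T φ π
/-- Satisfaction of CTL path formulas on paths. -/
def CTLp.Sat {AP : Type} (T : TS AP) : CTLp AP → (ℕ → T.State) → Prop
  | .next φ, π => CTLs.Sat T φ (π 1)
  | .untl φ ψ, π => ∃ j, CTLs.Sat T ψ (π j) ∧ ∀ i, i < j → CTLs.Sat T φ (π i)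
end

/-- A transition system satisfies a CTL state formula iff all its initial states do. -/
def TS.sat {AP : Type} (T : TS AP) (Φ : CTLs AP) : Prop := ∀ s ∈ T.init, CTLs.Sat T Φ s

/-- Admissible valuations on the class C: each variable denotes a CTL-expressible set. -/
def AdmissibleVal {AP : Type} (C : Set (TS AP)) (V : ℕ → Set {S : TS AP // S ∈ C}) : Prop :=
  ∀ p, ∃ Φ : CTLs AP, ∀ S : {S : TS AP // S ∈ C}, S ∈ V p ↔ (S : TS AP).sat Φ

/-- The refinement accessibility relation ⇝ on the class C. -/
def refRel {AP : Type} (C : Set (TS AP)) :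
    {S : TS AP // S ∈ C} → {S : TS AP // S ∈ C} → Prop :=
  fun S₁ S₂ => Abs S₁.1 S₂.1

/-- Validity of a modal formula at a world of the general frame (C, ⇝, Admiss(CTL)). -/
def ValidAt {AP : Type} (C : Set (TS AP)) (φ : MF) (S : {S : TS AP // S ∈ C}) : Prop :=
  ∀ V, AdmissibleVal C V → MF.Sat (refRel C) V φ S

/-- Validity on the general frame (C, ⇝, Admiss(CTL)). -/
def ValidOn {AP : Type} (C : Set (TS AP)) (φ : MF) : Prop := ∀ S, ValidAt C φ S

/-- The class of all finite abstractions of T. -/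
def FinAbs {AP : Type} (T : TS AP) : Set (TS AP) := {S | Finite S.State ∧ Abs S T}

/-- The class of all abstractions of T. -/
def AllAbs {AP : Type} (T : TS AP) : Set (TS AP) := {S | Abs S T}

/-- MLAR^fin_T. -/
def MLARfin {AP : Type} (T : TS AP) : Set MF := {φ | ValidOn (FinAbs T) φ}
/-- MLAR^all_T. -/
def MLARall {AP : Type} (T : TS AP) : Set MF := {φ | ValidOn (AllAbs T) φ}
set_option linter.dupNamespace false in
/-- MLAR on the class of all transition systems over the fixed countably infinite AP = ℕ. -/
def MLAR : Set MF := {φ | ValidOn (Set.univ : Set (TS ℕ)) φ}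

/-- Finite partial functions {0,…,n−1} ⇀ {0,1}. -/
def FPF (n : ℕ) : Type := Fin n → Option Bool

/-- g ≼ h iff h extends g. -/
def FPFle {n : ℕ} (g h : FPF n) : Prop := ∀ i x, g i = some x → h i = some x

/-- The modal logic of all finite partial function posets. -/
def S4FPF : Set MF := {φ | ∀ n : ℕ, ∀ V : ℕ → Set (FPF n), ∀ w, MF.Sat FPFle V φ w}

/-- Admissible-set algebra of a general Kripke frame:
closed under complements and finite (including empty and binary) unions. -/
def IsGeneralFrameAdmiss {W : Type*} (𝒜 : Set (Set W)) : Prop :=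
  (∅ : Set W) ∈ 𝒜 ∧ (∀ A ∈ 𝒜, Aᶜ ∈ 𝒜) ∧ (∀ A ∈ 𝒜, ∀ B ∈ 𝒜, A ∪ B ∈ 𝒜)

/-- Formulas valid at a world of a general Kripke frame (W, R, 𝒜). -/
def GValidAt {W : Type*} (R : W → W → Prop) (𝒜 : Set (Set W)) (φ : MF) (c : W) : Prop :=
  ∀ V : ℕ → Set W, (∀ p, V p ∈ 𝒜) → MF.Sat R V φ c

/-- A is a pure button at c: □(b→□b) and □◇b hold at c under V(b) = A. -/
def PureButton {W : Type*} (R : W → W → Prop) (c : W) (A : Set W) : Prop :=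
  (∀ d, R c d → d ∈ A → ∀ e, R d e → e ∈ A) ∧ (∀ d, R c d → ∃ e, R d e ∧ e ∈ A)

/-- A is a pure weak button at c: □(b→□b) and ◇b hold at c under V(b) = A. -/
def PureWeakButton {W : Type*} (R : W → W → Prop) (c : W) (A : Set W) : Prop :=
  (∀ d, R c d → d ∈ A → ∀ e, R d e → e ∈ A) ∧ (∃ e, R c e ∧ e ∈ A)

/-- B is a switch at c: □(◇s ∧ ◇¬s) holds at c under V(s) = B. -/
def IsSwitch {W : Type*} (R : W → W → Prop) (c : W) (B : Set W) : Prop :=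
  ∀ d, R c d → (∃ e, R d e ∧ e ∈ B) ∧ (∃ e, R d e ∧ e ∉ B)

/-- C is a B-restricted switch at c:
□(¬B → (◇(s ∧ ¬B) ∧ ◇(¬s ∧ ¬B))) holds at c under V(s) = C. -/
def RestrictedSwitch {W : Type*} (R : W → W → Prop) (c : W) (B C : Set W) : Prop :=
  ∀ d, R c d → d ∉ B →
    (∃ e, R d e ∧ e ∈ C ∧ e ∉ B) ∧ (∃ e, R d e ∧ e ∉ C ∧ e ∉ B)

/-- Independence of unpushed pure buttons A and switches B at c. -/
def Independent {W : Type*} (R : W → W → Prop) (c : W) {n m : ℕ}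
    (A : Fin n → Set W) (B : Fin m → Set W) : Prop :=
  ∀ (I₀ I₁ : Set (Fin n)) (J₀ J₁ : Set (Fin m)), I₀ ⊆ I₁ →
    ∀ d, R c d →
      ((∀ i, i ∈ I₀ ↔ d ∈ A i) ∧ (∀ j, j ∈ J₀ ↔ d ∈ B j)) →
      ∃ e, R d e ∧ (∀ i, i ∈ I₁ ↔ e ∈ A i) ∧ (∀ j, j ∈ J₁ ↔ e ∈ B j)

/-- Independence until B of pure buttons A and B-restricted switches C at c. -/
def IndependentUntil {W : Type*} (R : W → W → Prop) (c : W) (Bb : Set W) {n m : ℕ}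
    (A : Fin n → Set W) (C : Fin m → Set W) : Prop :=
  ∀ (I₀ I₁ : Set (Fin n)) (J₀ J₁ : Set (Fin m)), I₀ ⊆ I₁ →
    ∀ d, R c d →
      ((∀ i, i ∈ I₀ ↔ d ∈ A i) ∧ (∀ j, j ∈ J₀ ↔ d ∈ C j) ∧ d ∉ Bb) →
      ∃ e, R d e ∧ (∀ i, i ∈ I₁ ↔ e ∈ A i) ∧ (∀ j, j ∈ J₁ ↔ e ∈ C j) ∧ e ∉ Bb

/-- (L, Rr) is a decision at c: a pair of mutually exclusive unpushed pure weak buttons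
whose union is an unpushed pure button, with □(¬l ∨ ¬r) and □((◇l ∧ ◇r) ∨ l ∨ r) at c. -/
def Decision {W : Type*} (R : W → W → Prop) (c : W) (L Rr : Set W) : Prop :=
  PureWeakButton R c L ∧ c ∉ L ∧
  PureWeakButton R c Rr ∧ c ∉ Rr ∧
  PureButton R c (L ∪ Rr) ∧ c ∉ L ∪ Rr ∧
  (∀ d, R c d → ¬(d ∈ L ∧ d ∈ Rr)) ∧
  (∀ d, R c d → (((∃ e, R d e ∧ e ∈ L) ∧ (∃ e, R d e ∧ e ∈ Rr)) ∨ d ∈ L ∨ d ∈ Rr))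

/-- Independence of decisions at c. -/
def IndependentDecisions {W : Type*} (R : W → W → Prop) (c : W) {n : ℕ}
    (L Rr : Fin n → Set W) : Prop :=
  ∀ (I₀ I₁ J₀ J₁ : Set (Fin n)), I₀ ⊆ I₁ → J₀ ⊆ J₁ → (∀ i ∈ J₁, i ∉ I₁) →
    ∀ d, R c d →
      ((∀ i, i ∈ I₀ ↔ d ∈ L i) ∧ (∀ i, i ∈ J₀ ↔ d ∈ Rr i)) →
      ∃ e, R d e ∧ (∀ i, i ∈ I₁ ↔ e ∈ L i) ∧ (∀ i, i ∈ J₁ ↔ e ∈ Rr i)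

section Image

variable {AP : Type} {β : Type}

def TS.image (T : TS AP) (g : T.State → β) (lab : β → Set AP) : TS AP where
  State := Set.range g
  rel p q := ∃ s t, T.rel s t ∧ Set.rangeFactorization g s = p ∧ Set.rangeFactorization g t = q
  init := Set.rangeFactorization g '' T.init
  label p := lab p
  nonempty := T.nonempty.map (Set.rangeFactorization g)
  serial := by
    rintro ⟨_, s, rfl⟩
    obtain ⟨t, hst⟩ := T.serial s
    exact ⟨_, s, t, hst, rfl, rfl⟩

theorem TS.isAbstractionMap_image (T : TS AP) (g : T.State → β) (lab : β → Set AP)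
    (hlab : ∀ t, lab (g t) = T.label t) :
    IsAbstractionMap (T.image g lab) T (Set.rangeFactorization g) :=
  ⟨Set.rangeFactorization_surjective, hlab, fun _ _ => Iff.rfl, rfl⟩

end Image

theorem IsAbstractionMap.of_comp {AP : Type} {S U T : TS AP} {f : T.State → S.State}
    {g : T.State → U.State} {h : U.State → S.State}
    (hf : IsAbstractionMap S T f) (hg : IsAbstractionMap U T g) (hfac : ∀ t, h (g t) = f t) :
    IsAbstractionMap S U h := by
  obtain ⟨hf_surj, hf_label, hf_rel, hf_init⟩ := hf
  obtain ⟨hg_surj, hg_label, hg_rel, hg_init⟩ := hg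
  refine ⟨fun a => ?_, hg_surj.forall.2 fun t => ?_, fun a b => ?_, ?_⟩
  · obtain ⟨t, rfl⟩ := hf_surj a
    exact ⟨g t, hfac t⟩
  · rw [hfac, hf_label, hg_label]
  · rw [hf_rel]
    constructor
    · rintro ⟨s, t, hst, rfl, rfl⟩
      exact ⟨g s, g t, (hg_rel _ _).2 ⟨s, t, hst, rfl, rfl⟩, hfac s, hfac t⟩
    · rintro ⟨_, _, huv, rfl, rfl⟩
      obtain ⟨s, t, hst, rfl, rfl⟩ := (hg_rel _ _).1 huv
      exact ⟨s, t, hst, (hfac s).symm, (hfac t).symm⟩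
  · rw [hf_init, hg_init, Set.image_image]
    simp only [hfac]

-- The common refinement is the image of `T` under `t ↦ (f₁ t, f₂ t)`; it is finite as a subset
-- of `S₁.State × S₂.State`, and both projections are abstraction maps out of it.
/-- For every transition system T, the refinement relation ⇝ is directed
on the class of finite abstractions of T. -/
theorem stmt_1 (AP : Type) (T : TS AP) (S₁ S₂ : TS AP)
    (h₁ : S₁ ∈ FinAbs T) (h₂ : S₂ ∈ FinAbs T) :
    ∃ S ∈ FinAbs T, Abs S₁ S ∧ Abs S₂ S := by
  obtain ⟨hfin₁, f₁, hf₁⟩ := h₁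
  obtain ⟨hfin₂, f₂, hf₂⟩ := h₂
  let g : T.State → S₁.State × S₂.State := fun t => (f₁ t, f₂ t)
  let S := T.image g fun p => S₁.label p.1
  have hg : IsAbstractionMap S T (Set.rangeFactorization g) :=
    T.isAbstractionMap_image g _ hf₁.2.1
  have hfin : Finite S.State := Set.toFinite (Set.range g)
  exact ⟨S, ⟨hfin, _, hg⟩, ⟨fun p => p.1.1, hf₁.of_comp hg fun _ => rfl⟩,
    ⟨fun p => p.1.2, hf₂.of_comp hg fun _ => rfl⟩⟩

end MLAR
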